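/- arXiv:1604.06588 — 3 statements merged into one kernel-verified Lean document; each statement's English description precedes it below -/
import Mathlib

section
/- For α > 2, θ ≥ 0, r > 0: ∫_r^∞ (1 − 1/(1 + θ r^α v^{−α})) v dv = (r²/2)·𝔷(θ,α), where 𝔷(θ,α) = (2θ/(α−2))·₂F₁(1, 1−2/α; 2−2/α; −θ). -/
open Real MeasureTheory

noncomputable def hyp2F1 (a b c z : ℝ) : ℝ :=
  (Real.Gamma c / (Real.Gamma b * Real.Gamma (c - b))) *
    ∫ t in Set.Ioo (0 : ℝ) 1, t ^ (b - 1) * (1 - t) ^ (c - b - 1) * (1 - z * t) ^ (-a)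

/-- The interference functional `𝔷(θ,α) = (2θ/(α−2))·₂F₁(1, 1−2/α; 2−2/α; −θ)`. -/
noncomputable def zFun (θ α : ℝ) : ℝ :=
  2 * θ / (α - 2) * hyp2F1 1 (1 - 2 / α) (2 - 2 / α) (-θ)

/-! The substitution `v = r t^(-1/α)` maps `(0, 1)` onto `(r, ∞)` and turns the integral into
`(r²θ/α) ∫₀¹ t^(-2/α) (1 + θt)⁻¹ dt`. This is Euler's integral for `₂F₁(1, b; b + 1; -θ)` with
`b = 1 - 2/α`, whose Gamma prefactor `Γ(b + 1)/Γ(b)` is just `b`. -/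

open Set

theorem hyp2F1_one_self_add_one {b : ℝ} (hb : 0 < b) (z : ℝ) :
    hyp2F1 1 b (b + 1) z = b * ∫ t in Ioo (0 : ℝ) 1, t ^ (b - 1) * (1 - z * t)⁻¹ := by
  have hΓ : Real.Gamma b ≠ 0 := (Real.Gamma_pos_of_pos hb).ne'
  simp only [hyp2F1, add_sub_cancel_left, sub_self, rpow_zero, mul_one, rpow_neg_one,
    Real.Gamma_one, Real.Gamma_add_one hb.ne']
  field_simp

theorem zFun_eq_integral {α : ℝ} (hα : 2 < α) (θ : ℝ) :
    zFun θ α = 2 * θ / α * ∫ t in Ioo (0 : ℝ) 1, t ^ (-(2 / α)) * (1 + θ * t)⁻¹ := by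
  have hb : 0 < 1 - 2 / α := by
    rw [sub_pos, div_lt_one (by linarith)]; exact hα
  rw [zFun, show 2 - 2 / α = (1 - 2 / α) + 1 by ring, hyp2F1_one_self_add_one hb]
  simp only [sub_sub_cancel_left, neg_mul, sub_neg_eq_add]
  have : α - 2 ≠ 0 := by linarith
  field_simp

theorem image_const_mul_rpow_Ioo_of_neg {r q : ℝ} (hr : 0 < r) (hq : q < 0) :
    (fun t : ℝ => r * t ^ q) '' Ioo 0 1 = Ioi r := by
  ext v
  constructor
  · rintro ⟨t, ⟨ht0, ht1⟩, rfl⟩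
    have : 1 < t ^ q := one_lt_rpow_of_pos_of_lt_one_of_neg ht0 ht1 hq
    simp only [mem_Ioi]; nlinarith
  · intro (hv : r < v)
    have hvr : 1 < v / r := (one_lt_div hr).2 hv
    refine ⟨(v / r) ^ q⁻¹, ⟨rpow_pos_of_pos (one_pos.trans hvr) _,
      rpow_lt_one_of_one_lt_of_neg hvr (inv_lt_zero.2 hq)⟩, ?_⟩
    dsimp only
    rw [← rpow_mul (one_pos.trans hvr).le, inv_mul_cancel₀ hq.ne, rpow_one]
    field_simp

theorem integral_Ioi_eq_integral_Ioo_const_mul_rpow {r q : ℝ} (hr : 0 < r) (hq : q < 0)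
    (f : ℝ → ℝ) :
    ∫ v in Ioi r, f v = ∫ t in Ioo (0 : ℝ) 1, r * -q * t ^ (q - 1) * f (r * t ^ q) := by
  have hderiv : ∀ t ∈ Ioo (0 : ℝ) 1,
      HasDerivWithinAt (fun t : ℝ => r * t ^ q) (r * (q * t ^ (q - 1))) (Ioo 0 1) t :=
    fun t ht => ((hasDerivAt_rpow_const (Or.inl ht.1.ne')).const_mul r).hasDerivWithinAt
  have hinj : InjOn (fun t : ℝ => r * t ^ q) (Ioo 0 1) :=
    fun a ha b hb h =>
      (strictAntiOn_rpow_Ioi_of_exponent_neg hq).injOn ha.1 hb.1 (mul_left_cancel₀ hr.ne' h)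
  rw [← image_const_mul_rpow_Ioo_of_neg hr hq,
    integral_image_eq_integral_abs_deriv_smul measurableSet_Ioo hderiv hinj]
  refine setIntegral_congr_fun measurableSet_Ioo fun t ht => ?_
  rw [smul_eq_mul, abs_mul, abs_mul, abs_of_pos hr, abs_of_neg hq,
    abs_of_pos (rpow_pos_of_pos ht.1 _)]
  ring

theorem interference_integrand_substitution {α θ r t : ℝ} (hα : 0 < α) (hθ : 0 ≤ θ)
    (hr : 0 < r) (ht : 0 < t) :
    r * α⁻¹ * t ^ (-α⁻¹ - 1) *
        ((1 - 1 / (1 + θ * r ^ α * (r * t ^ (-α⁻¹)) ^ (-α))) * (r * t ^ (-α⁻¹))) =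
      r ^ 2 * θ / α * (t ^ (-(2 / α)) * (1 + θ * t)⁻¹) := by
  have hpow : (r * t ^ (-α⁻¹)) ^ (-α) = r ^ (-α) * t := by
    rw [mul_rpow hr.le (rpow_nonneg ht.le _), ← rpow_mul ht.le,
      neg_mul_neg, inv_mul_cancel₀ hα.ne', rpow_one]
  have hr_cancel : r ^ α * r ^ (-α) = 1 := by
    rw [← rpow_add hr, add_neg_cancel, rpow_zero]
  have ht_pow : t ^ (-α⁻¹ - 1) * t ^ (-α⁻¹) * t = t ^ (-(2 / α)) := by
    rw [← rpow_add ht, ← rpow_add_one ht.ne']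
    ring_nf
  have hden : 0 < 1 + θ * t := by positivity
  rw [hpow, ← ht_pow]
  field_simp
  linear_combination θ * t * hr_cancel

/-- For `α > 2`, `θ ≥ 0`, `r > 0`:
`∫_r^∞ (1 − 1/(1 + θ r^α v^{−α})) v dv = (r²/2)·𝔷(θ,α)`. -/
theorem interference_integral_exclusion (α θ r : ℝ) (hα : 2 < α) (hθ : 0 ≤ θ)
    (hr : 0 < r) :
    (∫ v in Set.Ioi r, (1 - 1 / (1 + θ * r ^ α * v ^ (-α))) * v) =
      r ^ 2 / 2 * zFun θ α := by
  have hα0 : 0 < α := by linarith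
  rw [integral_Ioi_eq_integral_Ioo_const_mul_rpow hr (neg_lt_zero.2 (inv_pos.2 hα0)),
    zFun_eq_integral hα, ← mul_assoc, ← integral_const_mul]
  refine setIntegral_congr_fun measurableSet_Ioo fun t ht => ?_
  rw [neg_neg, interference_integrand_substitution hα0 hθ hr ht.1]
  ring
end

section
/- In the baseline interference-limited PPP network with α = 4, the coverage probability of the nearest-transmitter-associated user is p(θ) = 1/(1 + √θ·arctan√θ), independent of the intensity λ. -/
open Real MeasureTheory

theorem integral_Ioi_mul_exp_neg_mul_sq {b : ℝ} (hb : 0 < b) :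
    ∫ r in Set.Ioi (0 : ℝ), r * exp (-b * r ^ 2) = (2 * b)⁻¹ := by
  have h : ((∫ r in Set.Ioi (0 : ℝ), r * exp (-b * r ^ 2) : ℝ) : ℂ) = ((2 * b)⁻¹ : ℝ) := by
    rw [← integral_complex_ofReal]
    push_cast
    exact integral_mul_cexp_neg_mul_sq (by simpa using hb)
  exact_mod_cast h

theorem baseline_coverage_general (lam θ : ℝ) (hlam : 0 < lam) :
    (∫ r in Set.Ioi (0 : ℝ),
        2 * π * lam * r *
          exp (-π * lam * r ^ 2 * (1 + Real.sqrt θ * Real.arctan (Real.sqrt θ)))) =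
      1 / (1 + Real.sqrt θ * Real.arctan (Real.sqrt θ)) := by
  set c := 1 + Real.sqrt θ * Real.arctan (Real.sqrt θ)
  have hc : 0 < c := by
    have := Real.arctan_nonneg.2 (Real.sqrt_nonneg θ)
    positivity
  calc (∫ r in Set.Ioi (0 : ℝ), 2 * π * lam * r * exp (-π * lam * r ^ 2 * c))
      = 2 * π * lam * ∫ r in Set.Ioi (0 : ℝ), r * exp (-(π * lam * c) * r ^ 2) := by
        rw [← integral_const_mul]
        congr with r
        ring_nf
    _ = 1 / c := by
        rw [integral_Ioi_mul_exp_neg_mul_sq (by positivity)]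
        field_simp

/-- Baseline interference-limited PPP coverage for `α = 4`: the coverage probability
`p(θ) = ∫₀^∞ 2πλ r exp(−πλ r²(1+√θ arctan√θ)) dr` equals `1/(1+√θ·arctan√θ)`,
independently of the intensity `λ`. -/
theorem baseline_coverage (lam θ : ℝ) (hlam : 0 < lam) (hθ : 0 ≤ θ) :
    (∫ r in Set.Ioi (0 : ℝ),
        2 * π * lam * r *
          exp (-π * lam * r ^ 2 * (1 + Real.sqrt θ * Real.arctan (Real.sqrt θ)))) =
      1 / (1 + Real.sqrt θ * Real.arctan (Real.sqrt θ)) :=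
  baseline_coverage_general lam θ hlam
end

section
/- For any N ≥ 1, intensities λ_i > 0, and θ ≥ 0, the infrastructure sharing coverage Σ_i λ_i/(Σ_j λ_j + λ_i √θ arctan√θ) is at least the baseline coverage 1/(1 + √θ arctan√θ), with equality iff N = 1 (or θ = 0). -/
open Real

/-!
Write `t = √θ · arctan √θ ≥ 0` and `S = Σⱼ λⱼ`. Since `λᵢ ≤ S`, each term satisfies
`λᵢ / (S + λᵢ t) ≥ λᵢ / (S (1 + t))`, and the right-hand sides sum to `1 / (1 + t)`.
Equality in the `i`-th term means `t (S - λᵢ) = 0`, and `λᵢ = S` for every `i` forces a single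
index because the intensities are positive.
-/

section SharingBound

variable {ι : Type*} [Fintype ι]

theorem div_mul_one_add_le_div_add_mul {w S t : ℝ} (hw : 0 ≤ w) (hwS : w ≤ S) (hS : 0 < S)
    (ht : 0 ≤ t) : w / (S * (1 + t)) ≤ w / (S + w * t) :=
  div_le_div_of_nonneg_left hw (by positivity) (by nlinarith)

theorem div_mul_one_add_eq_div_add_mul_iff {w S t : ℝ} (hw : 0 < w) (hS : 0 < S) (ht : 0 ≤ t) :
    w / (S * (1 + t)) = w / (S + w * t) ↔ t = 0 ∨ w = S := by
  rw [div_eq_div_iff (by positivity) (by positivity), mul_right_inj' hw.ne',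
    ← sub_eq_zero, show S + w * t - S * (1 + t) = t * (w - S) by ring, mul_eq_zero, sub_eq_zero]

theorem forall_eq_sum_iff_subsingleton {w : ι → ℝ} (hw : ∀ i, 0 < w i) :
    (∀ i, w i = ∑ j, w j) ↔ Subsingleton ι := by
  refine ⟨fun h => ⟨fun i j => by_contra fun hij => ?_⟩,
    fun _ i => (Fintype.sum_subsingleton w i).symm⟩
  exact (h i).not_lt <| Finset.single_lt_sum (Ne.symm hij) (Finset.mem_univ i)
    (Finset.mem_univ j) (hw j) fun k _ _ => (hw k).le

theorem sum_div_mul_one_add {w : ι → ℝ} (hw : ∀ i, 0 < w i) [Nonempty ι] (t : ℝ) :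
    ∑ i, w i / ((∑ j, w j) * (1 + t)) = 1 / (1 + t) := by
  have hS : 0 < ∑ j, w j := Finset.sum_pos (fun i _ => hw i) Finset.univ_nonempty
  rw [← Finset.sum_div, div_mul_cancel_left₀ hS.ne', one_div]

theorem div_sum_mul_one_add_le {w : ι → ℝ} {t : ℝ} (hw : ∀ i, 0 < w i) (ht : 0 ≤ t) (i : ι) :
    w i / ((∑ j, w j) * (1 + t)) ≤ w i / ((∑ j, w j) + w i * t) :=
  div_mul_one_add_le_div_add_mul (hw i).le
    (Finset.single_le_sum (fun j _ => (hw j).le) (Finset.mem_univ i))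
    (Finset.sum_pos (fun j _ => hw j) ⟨i, Finset.mem_univ i⟩) ht

theorem one_div_one_add_le_sum_div_sum_add_mul {w : ι → ℝ} {t : ℝ} (hw : ∀ i, 0 < w i)
    [Nonempty ι] (ht : 0 ≤ t) :
    1 / (1 + t) ≤ ∑ i, w i / ((∑ j, w j) + w i * t) := by
  rw [← sum_div_mul_one_add hw t]
  exact Finset.sum_le_sum fun i _ => div_sum_mul_one_add_le hw ht i

theorem sum_div_sum_add_mul_eq_one_div_one_add_iff {w : ι → ℝ} {t : ℝ} (hw : ∀ i, 0 < w i)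
    [Nonempty ι] (ht : 0 ≤ t) :
    ∑ i, w i / ((∑ j, w j) + w i * t) = 1 / (1 + t) ↔ t = 0 ∨ Subsingleton ι := by
  have hS : 0 < ∑ j, w j := Finset.sum_pos (fun i _ => hw i) Finset.univ_nonempty
  rw [← sum_div_mul_one_add hw t, eq_comm,
    Finset.sum_eq_sum_iff_of_le fun i _ => div_sum_mul_one_add_le hw ht i]
  simp only [Finset.mem_univ, true_implies, div_mul_one_add_eq_div_add_mul_iff (hw _) hS ht]
  rw [forall_or_left, forall_eq_sum_iff_subsingleton hw]

end SharingBound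

theorem sqrt_mul_arctan_sqrt_nonneg (θ : ℝ) : 0 ≤ √θ * arctan √θ :=
  mul_nonneg (sqrt_nonneg θ) (arctan_nonneg.mpr (sqrt_nonneg θ))

theorem sqrt_mul_arctan_sqrt_eq_zero_iff {θ : ℝ} (hθ : 0 ≤ θ) : √θ * arctan √θ = 0 ↔ θ = 0 := by
  rw [mul_eq_zero, arctan_eq_zero_iff, or_self, sqrt_eq_zero hθ]

/-- For any `N ≥ 1`, intensities `λᵢ > 0` and `θ ≥ 0`, the infrastructure sharing
coverage `Σᵢ λᵢ/(Σⱼ λⱼ + λᵢ √θ arctan√θ)` is at least the baseline coverage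
`1/(1+√θ arctan√θ)`, with equality iff `N = 1` or `θ = 0`. -/
theorem infrastructure_sharing_gain (N : ℕ) (hN : 1 ≤ N) (lam : Fin N → ℝ)
    (hlam : ∀ i, 0 < lam i) (θ : ℝ) (hθ : 0 ≤ θ) :
    (1 / (1 + Real.sqrt θ * Real.arctan (Real.sqrt θ)) ≤
        ∑ i, lam i / ((∑ j, lam j) + lam i * (Real.sqrt θ * Real.arctan (Real.sqrt θ)))) ∧
      ((∑ i, lam i / ((∑ j, lam j) + lam i * (Real.sqrt θ * Real.arctan (Real.sqrt θ)))) =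
          1 / (1 + Real.sqrt θ * Real.arctan (Real.sqrt θ)) ↔ N = 1 ∨ θ = 0) := by
  have : Nonempty (Fin N) := Fin.pos_iff_nonempty.mp hN
  have ht := sqrt_mul_arctan_sqrt_nonneg θ
  refine ⟨one_div_one_add_le_sum_div_sum_add_mul hlam ht, ?_⟩
  rw [sum_div_sum_add_mul_eq_one_div_one_add_iff hlam ht, sqrt_mul_arctan_sqrt_eq_zero_iff hθ,
    Fin.subsingleton_iff_le_one, or_comm, show N ≤ 1 ↔ N = 1 by omega]
end
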